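/- For the total-degree index set I(l) = {β ∈ ℕ_0^d : max(0, l - d + 1) ≤ ‖β‖_1 ≤ l} extended to I'(l) = {β : ‖β‖_1 ≤ l}, the combination coefficient formula c_β = Σ_{j ∈ {0,1}^d} (-1)^{‖j‖_1} χ_{I'(l)}(β + j) evaluates to c_β = (-1)^{l - ‖β‖_1} C(d - 1, l - ‖β‖_1) when l - d + 1 ≤ ‖β‖_1 ≤ l, and c_β = 0 when ‖β‖_1 < l - d + 1. -/

import Mathlib

/-!
Grouping the vectors `j ∈ {0,1}^d` by their support shows that, with `m = l - ‖β‖₁`,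
`c_β = ∑_{k ≤ m} (-1)^k C(d, k)`. By Pascal's rule this truncated alternating sum of a row of
binomial coefficients telescopes to `(-1)^m C(d - 1, m)`, which vanishes once `m ≥ d`.
-/

open Finset

def finTwoPiEquivFinset (ι : Type*) [Fintype ι] [DecidableEq ι] : (ι → Fin 2) ≃ Finset ι where
  toFun j := {i | j i = 1}
  invFun s i := if i ∈ s then 1 else 0
  left_inv j := by
    funext i
    obtain h | h : j i = 0 ∨ j i = 1 := by omega
    all_goals simp [h]
  right_inv s := by ext i; simp

lemma sum_val_eq_card_finTwoPiEquivFinset {ι : Type*} [Fintype ι] [DecidableEq ι]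
    (j : ι → Fin 2) : ∑ i, (j i : ℕ) = #(finTwoPiEquivFinset ι j) := by
  rw [finTwoPiEquivFinset, Equiv.coe_fn_mk, card_filter]
  refine sum_congr rfl fun i _ => ?_
  obtain h | h : j i = 0 ∨ j i = 1 := by omega
  all_goals simp [h]

lemma Fintype.sum_fin_two_pi_eq_sum_range_choose {ι M : Type*} [Fintype ι] [DecidableEq ι]
    [AddCommMonoid M] (f : ℕ → M) :
    ∑ j : ι → Fin 2, f (∑ i, (j i : ℕ)) =
      ∑ k ∈ range (Fintype.card ι + 1), (Fintype.card ι).choose k • f k := by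
  rw [← card_univ, ← sum_powerset_apply_card, powerset_univ]
  exact Fintype.sum_equiv (finTwoPiEquivFinset ι) _ _
    fun j => by rw [sum_val_eq_card_finTwoPiEquivFinset]

lemma alternating_sum_range_choose_truncated (n m : ℕ) :
    ∑ k ∈ range (n + 2), ((n + 1).choose k : ℤ) * ((-1) ^ k * if k ≤ m then 1 else 0) =
      (-1) ^ m * n.choose m := by
  have hfilter : {k ∈ range (n + m + 2) | k ≤ m} = range (m + 1) := by
    ext k; simp only [mem_filter, mem_range]; omega
  calc _ = ∑ k ∈ range (n + m + 2),
          ((n + 1).choose k : ℤ) * ((-1) ^ k * if k ≤ m then 1 else 0) := by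
        refine sum_subset (range_subset_range.2 (by omega)) fun k _ hk => ?_
        rw [mem_range, not_lt] at hk
        simp [Nat.choose_eq_zero_of_lt (by omega : n + 1 < k)]
    _ = ∑ k ∈ range (n + m + 2), if k ≤ m then (-1) ^ k * ((n + 1).choose k : ℤ) else 0 := by
        refine sum_congr rfl fun k _ => ?_
        split_ifs <;> ring
    _ = (-1) ^ m * n.choose m := by
        rw [← sum_filter, hfilter, Int.alternating_sum_range_choose_eq_choose]

/-- Combination coefficient formula for the total-degree index set
`I'(l) = {β : ‖β‖₁ ≤ l}`: the coefficient
`c β = ∑_{j ∈ {0,1}^d} (-1)^{‖j‖₁} χ_{I'(l)}(β + j)` equals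
`(-1)^{l - ‖β‖₁} C(d-1, l - ‖β‖₁)` when `l - d + 1 ≤ ‖β‖₁ ≤ l`, and `0` when
`‖β‖₁ + d ≤ l` (i.e. `‖β‖₁ < l - d + 1`). -/
theorem smolyak_total_degree_coefficient (d l : ℕ) (hd : 1 ≤ d)
    (β : Fin d → ℕ) (hβ : ∑ i, β i ≤ l)
    (c : ℤ)
    (hc : c = ∑ j : Fin d → Fin 2,
        ((-1 : ℤ) ^ (∑ i, (j i : ℕ))) *
          (if (∑ i, (β i + (j i : ℕ))) ≤ l then 1 else 0)) :
    (l < ∑ i, β i + d →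
      c = (-1 : ℤ) ^ (l - ∑ i, β i) * ((d - 1).choose (l - ∑ i, β i) : ℤ)) ∧
    (∑ i, β i + d ≤ l → c = 0) := by
  obtain ⟨n, rfl⟩ := Nat.exists_eq_add_of_le' hd
  have hc' : c = (-1) ^ (l - ∑ i, β i) * n.choose (l - ∑ i, β i) := by
    have hshift (k : ℕ) : ∑ i, β i + k ≤ l ↔ k ≤ l - ∑ i, β i := by omega
    simp only [hc, sum_add_distrib, hshift]
    rw [Fintype.sum_fin_two_pi_eq_sum_range_choose
      (fun k => (-1 : ℤ) ^ k * if k ≤ l - ∑ i, β i then 1 else 0), Fintype.card_fin]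
    simpa only [nsmul_eq_mul] using alternating_sum_range_choose_truncated n (l - ∑ i, β i)
  refine ⟨fun _ => hc', fun hsd => ?_⟩
  rw [hc', Nat.choose_eq_zero_of_lt (by omega : n < l - ∑ i, β i)]
  simp
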